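/- Let $h : [0,\infty) \to [0,\infty)$ be bounded, let $L = \limsup_{t\to\infty} h(t) < \infty$, and suppose there exist constants $A, B \geq 0$ and $\mu \in (0,1)$ such that for all $t > 0$, $h(t) \leq \varepsilon(t) + A \int_0^\mu (1-\tau)^{-1} h(t\tau)\, d\tau + B \sup_{\tau \in [\mu t, t]} h(\tau)$, where $\varepsilon(t) \to 0$ as $t \to \infty$. Then $L \leq (A \ln\frac{1}{1-\mu} + B) L$. In particular, if $B < 1$ and $\mu$ is small enough that $A \ln\frac{1}{1-\mu} + B < 1$, then $L = 0$, i.e., $h(t) \to 0$ as $t \to \infty$. -/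
import Mathlib


open Filter Set

lemma aux_int_inv (a b : ℝ) (hab : a ≤ b) (hb : b < 1) :
    ∫ τ in a..b, (1 - τ)⁻¹ = Real.log ((1 - a) / (1 - b)) := by
  have h1 : (∫ τ in a..b, (1 - τ)⁻¹) = ∫ x in (1 - b)..(1 - a), x⁻¹ :=
    intervalIntegral.integral_comp_sub_left (fun x => x⁻¹) 1
  rw [h1, integral_inv]
  exact Set.notMem_uIcc_of_lt (by linarith) (by linarith)

lemma aux_intble (a b : ℝ) (hab : a ≤ b) (hb : b < 1) :
    IntervalIntegrable (fun τ => (1 - τ)⁻¹) MeasureTheory.volume a b := by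
  apply ContinuousOn.intervalIntegrable
  apply ContinuousOn.inv₀ (by fun_prop)
  intro x hx
  rw [Set.uIcc_of_le hab] at hx
  have : x ≤ b := hx.2
  intro hc; linarith [sub_eq_zero.mp hc]

lemma aux_int_bound (g : ℝ → ℝ) (M L' s μ : ℝ) (hs : 0 < s) (hsμ : s ≤ μ) (hμ1 : μ < 1)
    (hgM : ∀ τ, g τ ≤ M)
    (hgL : ∀ τ ∈ Set.Icc s μ, g τ ≤ L') (hL0 : 0 ≤ L') (hM0 : 0 ≤ M)
    (hi : IntervalIntegrable (fun τ => (1 - τ)⁻¹ * g τ) MeasureTheory.volume 0 μ) :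
    ∫ τ in (0:ℝ)..μ, (1 - τ)⁻¹ * g τ ≤
      M * Real.log (1 / (1 - s)) + L' * Real.log (1 / (1 - μ)) := by
  have hs1 : s < 1 := lt_of_le_of_lt hsμ hμ1
  have hμ0 : (0:ℝ) ≤ μ := le_trans hs.le hsμ
  have hi1 : IntervalIntegrable (fun τ => (1 - τ)⁻¹ * g τ) MeasureTheory.volume 0 s := by
    apply hi.mono_set
    rw [Set.uIcc_of_le hs.le, Set.uIcc_of_le hμ0]
    exact Set.Icc_subset_Icc le_rfl hsμ
  have hi2 : IntervalIntegrable (fun τ => (1 - τ)⁻¹ * g τ) MeasureTheory.volume s μ := by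
    apply hi.mono_set
    rw [Set.uIcc_of_le hsμ, Set.uIcc_of_le hμ0]
    exact Set.Icc_subset_Icc hs.le le_rfl
  have hsplit := intervalIntegral.integral_add_adjacent_intervals hi1 hi2
  have b1 : (∫ τ in (0:ℝ)..s, (1 - τ)⁻¹ * g τ) ≤ ∫ τ in (0:ℝ)..s, (1 - τ)⁻¹ * M := by
    apply intervalIntegral.integral_mono_on hs.le hi1 ((aux_intble 0 s hs.le hs1).mul_const M)
    intro x hx
    exact mul_le_mul_of_nonneg_left (hgM x) (inv_nonneg.2 (by linarith [hx.2]))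
  have b2 : (∫ τ in s..μ, (1 - τ)⁻¹ * g τ) ≤ ∫ τ in s..μ, (1 - τ)⁻¹ * L' := by
    apply intervalIntegral.integral_mono_on hsμ hi2 ((aux_intble s μ hsμ hμ1).mul_const L')
    intro x hx
    exact mul_le_mul_of_nonneg_left (hgL x hx) (inv_nonneg.2 (by linarith [hx.2]))
  have e1 : (∫ τ in (0:ℝ)..s, (1 - τ)⁻¹ * M) = Real.log (1 / (1 - s)) * M := by
    rw [intervalIntegral.integral_mul_const, aux_int_inv 0 s hs.le hs1]
    norm_num
  have e2 : (∫ τ in s..μ, (1 - τ)⁻¹ * L') = Real.log ((1 - s) / (1 - μ)) * L' := by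
    rw [intervalIntegral.integral_mul_const, aux_int_inv s μ hsμ hμ1]
  have hle : Real.log ((1 - s) / (1 - μ)) ≤ Real.log (1 / (1 - μ)) := by
    apply Real.log_le_log (div_pos (by linarith) (by linarith))
    gcongr <;> linarith
  have hfin : Real.log ((1 - s) / (1 - μ)) * L' ≤ Real.log (1 / (1 - μ)) * L' :=
    mul_le_mul_of_nonneg_right hle hL0
  linarith [b1, b2, e1, e2, hfin, hsplit]

lemma aux_int_bound' (g : ℝ → ℝ) (M L' s μ c : ℝ) (hs : 0 < s) (hsμ : s ≤ μ) (hμ1 : μ < 1)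
    (hgM : ∀ τ, g τ ≤ M)
    (hgL : ∀ τ ∈ Set.Icc s μ, g τ ≤ L') (hL0 : 0 ≤ L') (hM0 : 0 ≤ M) (hc : 0 ≤ c) :
    ∫ τ in (0:ℝ)..μ, ((1 - τ)⁻¹ * g τ + c) ≤
      M * Real.log (1 / (1 - s)) + L' * Real.log (1 / (1 - μ)) + c * μ := by
  have hs1 : s < 1 := lt_of_le_of_lt hsμ hμ1
  have hμ0 : (0:ℝ) ≤ μ := le_trans hs.le hsμ
  have hlogs : 0 ≤ Real.log (1 / (1 - s)) :=
    Real.log_nonneg (one_le_one_div (by linarith) (by linarith))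
  have hlogμ : 0 ≤ Real.log (1 / (1 - μ)) :=
    Real.log_nonneg (one_le_one_div (by linarith) (by linarith))
  by_cases hi : IntervalIntegrable (fun τ => (1 - τ)⁻¹ * g τ + c) MeasureTheory.volume 0 μ
  · have hi' : IntervalIntegrable (fun τ => (1 - τ)⁻¹ * g τ) MeasureTheory.volume 0 μ := by
      have h2 := hi.sub (intervalIntegrable_const (c := c))
      simpa using h2
    have hsum : (∫ τ in (0:ℝ)..μ, ((1 - τ)⁻¹ * g τ + c)) =
        (∫ τ in (0:ℝ)..μ, (1 - τ)⁻¹ * g τ) + (∫ _τ in (0:ℝ)..μ, c) :=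
      intervalIntegral.integral_add hi' (intervalIntegrable_const (c := c))
    have hconst : (∫ _τ in (0:ℝ)..μ, c) = c * μ := by
      rw [intervalIntegral.integral_const]
      simp [mul_comm]
    have hb := aux_int_bound g M L' s μ hs hsμ hμ1 hgM hgL hL0 hM0 hi'
    rw [hsum, hconst]
    linarith
  · rw [intervalIntegral.integral_undef hi]
    have : 0 ≤ c * μ := mul_nonneg hc hμ0
    nlinarith [mul_nonneg hM0 hlogs, mul_nonneg hL0 hlogμ]

set_option maxHeartbeats 1000000 in
theorem stmt_15 (h ε : ℝ → ℝ) (μ A B : ℝ) (hμ : 0 < μ) (hμ1 : μ < 1)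
    (hA : 0 ≤ A) (hB : 0 ≤ B)
    (hnonneg : ∀ t, 0 ≤ h t) (hbdd : BddAbove (Set.range h))
    (hε : Tendsto ε atTop (nhds 0))
    (hineq : ∀ t > (0:ℝ),
      h t ≤ ε t + A * ∫ τ in (0:ℝ)..μ, (1 - τ)⁻¹ * h (t * τ)
            + B * sSup (h '' Icc (μ * t) t))
    (L : ℝ) (hL : L = Filter.limsup h atTop) :
    L ≤ (A * Real.log (1 / (1 - μ)) + B) * L ∧
    (A * Real.log (1 / (1 - μ)) + B < 1 → Tendsto h atTop (nhds 0)) := by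
  obtain ⟨M, hMub⟩ := hbdd
  have hM : ∀ x, h x ≤ M := fun x => hMub (Set.mem_range_self x)
  have hM0 : (0:ℝ) ≤ M := le_trans (hnonneg 0) (hM 0)
  have hbu : IsBoundedUnder (· ≤ ·) atTop h :=
    ⟨M, eventually_map.mpr (Eventually.of_forall hM)⟩
  have hbl : IsBoundedUnder (· ≥ ·) atTop h :=
    ⟨0, eventually_map.mpr (Eventually.of_forall hnonneg)⟩
  have hL0 : 0 ≤ L := by
    rw [hL]
    exact le_limsup_of_frequently_le (Frequently.of_forall hnonneg) hbu
  set lg := Real.log (1 / (1 - μ)) with hlg_def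
  have hlg0 : 0 ≤ lg :=
    Real.log_nonneg (one_le_one_div (by linarith) (by linarith))
  have hμlg : μ ≤ lg := by
    have h1 : Real.log (1 - μ) ≤ (1 - μ) - 1 :=
      Real.log_le_sub_one_of_pos (by linarith)
    rw [hlg_def, one_div, Real.log_inv]
    linarith
  set C2 := A * lg + A * B * μ with hC2_def
  set K := 1 + A + A * lg + A * B * μ with hK_def
  have hK0 : 0 ≤ K := by positivity
  clear_value C2 K
  have key : ∀ δ > (0:ℝ), L ≤ C2 * L + K * δ := by
    intro δ hδ
    -- choose the splitting point s
    set s₀ := 1 - Real.exp (-(δ / (M + 1))) with hs₀_def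
    have hexp_pos : 0 < Real.exp (-(δ / (M + 1))) := Real.exp_pos _
    have hexp_lt : Real.exp (-(δ / (M + 1))) < 1 := by
      have h1 : Real.exp (-(δ / (M + 1))) < Real.exp 0 :=
        Real.exp_lt_exp.2 (neg_lt_zero.mpr (by positivity))
      simpa using h1
    have hs₀ : 0 < s₀ := by rw [hs₀_def]; linarith
    have hs₀1 : s₀ < 1 := by rw [hs₀_def]; linarith
    have hlog_s₀ : Real.log (1 / (1 - s₀)) = δ / (M + 1) := by
      rw [hs₀_def]
      rw [show (1:ℝ) - (1 - Real.exp (-(δ / (M + 1)))) = Real.exp (-(δ / (M + 1))) by ring]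
      rw [one_div, Real.log_inv, Real.log_exp]
      ring
    set s := min s₀ μ with hs_def
    have hs : 0 < s := lt_min hs₀ hμ
    have hsμ : s ≤ μ := min_le_right _ _
    have hs1 : s < 1 := lt_of_le_of_lt hsμ hμ1
    have hlogs : Real.log (1 / (1 - s)) ≤ δ / (M + 1) := by
      rw [← hlog_s₀]
      apply Real.log_le_log (one_div_pos.mpr (by linarith))
      apply one_div_le_one_div_of_le (by linarith)
      have : s ≤ s₀ := min_le_left _ _
      linarith
    have hlogs0 : 0 ≤ Real.log (1 / (1 - s)) :=
      Real.log_nonneg (one_le_one_div (by linarith) (by linarith))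
    -- eventual bounds
    have hlimlt : Filter.limsup h atTop < L + δ := by rw [← hL]; linarith
    obtain ⟨T₁, hT₁⟩ := eventually_atTop.mp (eventually_lt_of_limsup_lt hlimlt hbu)
    obtain ⟨T₂, hT₂⟩ := Metric.tendsto_atTop.mp hε δ hδ
    set T := max T₁ T₂ with hT_def
    set t0 := max (max (T / μ) (T / s)) (max T 1) with ht0_def
    have hev : ∀ t ≥ t0, h t ≤ C2 * L + K * δ := by
      intro t ht
      have ht1 : (1:ℝ) ≤ t := le_trans (le_trans (le_max_right _ _) (le_max_right _ _)) ht
      have htpos : (0:ℝ) < t := by linarith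
      have htT : T ≤ t := le_trans (le_trans (le_max_left _ _) (le_max_right _ _)) ht
      have hμt : T ≤ μ * t := by
        have h1 : T / μ ≤ t := le_trans (le_trans (le_max_left _ _) (le_max_left _ _)) ht
        rw [div_le_iff₀ hμ] at h1
        linarith [h1]
      have hst : T ≤ s * t := by
        have h1 : T / s ≤ t := le_trans (le_trans (le_max_right _ _) (le_max_left _ _)) ht
        rw [div_le_iff₀ hs] at h1
        linarith [h1]
      -- ε bound
      have hεb : ε t ≤ δ := by
        have h2 := hT₂ t (le_trans (le_max_right T₁ T₂) htT)
        rw [Real.dist_eq, sub_zero] at h2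
        exact le_of_lt (lt_of_abs_lt h2)
      have hLδ0 : (0:ℝ) ≤ L + δ := by linarith
      -- sSup bound
      have hsup : sSup (h '' Icc (μ * t) t) ≤ L + δ := by
        apply Real.sSup_le ?_ hLδ0
        rintro x ⟨τ, hτ, rfl⟩
        have : T₁ ≤ τ := le_trans (le_trans (le_max_left T₁ T₂) hμt) hτ.1
        exact (hT₁ τ this).le
      have hsup0 : 0 ≤ sSup (h '' Icc (μ * t) t) := by
        apply Real.sSup_nonneg
        rintro x ⟨τ, hτ, rfl⟩
        exact hnonneg τ
      -- integral bound
      have hint : (∫ τ in (0:ℝ)..μ, ((1 - τ)⁻¹ * h (t * τ) + B * sSup (h '' Icc (μ * t) t))) ≤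
          M * Real.log (1 / (1 - s)) + (L + δ) * lg + (B * sSup (h '' Icc (μ * t) t)) * μ := by
        apply aux_int_bound' (fun τ => h (t * τ)) M (L + δ) s μ _ hs hsμ hμ1
          (fun τ => hM _) ?_ hLδ0 hM0 (mul_nonneg hB hsup0)
        intro τ hτ
        have hTτ : T₁ ≤ t * τ := by
          have h1 : s * t ≤ t * τ := by nlinarith [hτ.1, hτ.2]
          linarith [le_max_left T₁ T₂, hst]
        exact (hT₁ (t * τ) hTτ).le
      have hmain := hineq t htpos
      have hA1 : A * (∫ τ in (0:ℝ)..μ, ((1 - τ)⁻¹ * h (t * τ) + B * sSup (h '' Icc (μ * t) t))) ≤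
          A * (M * Real.log (1 / (1 - s)) + (L + δ) * lg + (B * sSup (h '' Icc (μ * t) t)) * μ) :=
        mul_le_mul_of_nonneg_left hint hA
      have hMs : M * Real.log (1 / (1 - s)) ≤ δ := by
        have h3 := mul_le_mul_of_nonneg_left hlogs hM0
        have h2 : M * (δ / (M + 1)) ≤ δ := by
          rw [mul_div_assoc', div_le_iff₀ (by linarith)]
          nlinarith
        linarith
      have hBS : (B * sSup (h '' Icc (μ * t) t)) * μ ≤ B * (L + δ) * μ := by
        have := mul_le_mul_of_nonneg_left hsup hB
        nlinarith [hμ.le]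
      have hA2 : A * (M * Real.log (1 / (1 - s)) + (L + δ) * lg + (B * sSup (h '' Icc (μ * t) t)) * μ) ≤
          A * (δ + (L + δ) * lg + B * (L + δ) * μ) :=
        mul_le_mul_of_nonneg_left (by linarith) hA
      have hfin : h t ≤ δ + A * (δ + (L + δ) * lg + B * (L + δ) * μ) := by
        linarith [hmain, hA1, hA2, hεb]
      have hring : δ + A * (δ + (L + δ) * lg + B * (L + δ) * μ) = C2 * L + K * δ := by
        rw [hC2_def, hK_def]; ring
      linarith [hfin, hring.le, hring.ge]
    conv_lhs => rw [hL]
    exact limsup_le_of_le hbl.isCoboundedUnder_le (eventually_atTop.mpr ⟨t0, hev⟩)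
  have hLC2 : L ≤ C2 * L := by
    apply le_of_forall_pos_le_add
    intro η hη
    have hkey := key (η / (K + 1)) (by positivity)
    have : K * (η / (K + 1)) ≤ η := by
      rw [mul_div_assoc', div_le_iff₀ (by linarith)]
      nlinarith
    linarith
  constructor
  · -- L ≤ (A * lg + B) * L
    by_cases hAμ : A * μ ≤ 1
    · -- C2 ≤ A * lg + B
      have h1 : A * B * μ ≤ B := by nlinarith
      have h2 : C2 ≤ A * lg + B := by rw [hC2_def]; linarith
      have h3 : C2 * L ≤ (A * lg + B) * L := mul_le_mul_of_nonneg_right h2 hL0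
      linarith
    · push_neg at hAμ
      have h1 : 1 ≤ A * lg := le_trans hAμ.le (by nlinarith)
      nlinarith
  · intro hC1
    have hAlg : A * lg < 1 := by nlinarith
    have hAμ : A * μ < 1 := lt_of_le_of_lt (by nlinarith) hAlg
    have hABμ : A * B * μ ≤ B := by nlinarith
    have hC2lt : C2 < 1 := by rw [hC2_def]; linarith
    have hLz : L = 0 := by
      have : (1 - C2) * L ≤ 0 := by nlinarith
      have : L ≤ 0 := by nlinarith
      linarith
    apply tendsto_of_liminf_eq_limsup ?_ ?_ hbu hbl
    · apply le_antisymm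
      · calc liminf h atTop ≤ limsup h atTop := liminf_le_limsup hbu hbl
          _ = 0 := by rw [← hL, hLz]
      · exact le_liminf_of_le hbu.isCoboundedUnder_ge (Eventually.of_forall hnonneg)
    · rw [← hL, hLz]
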